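/- Let T = S_k + u ⊗ v be a quasinormal operator on a Hilbert space with u, v nonzero and v, S_k*u linearly dependent. Then v is an eigenvector of S_k*. -/

import Mathlib

open ContinuousLinearMap

noncomputable def rankOne {H : Type*} [NormedAddCommGroup H] [InnerProductSpace ℂ H]
    [CompleteSpace H] (u v : H) : H →L[ℂ] H :=
  (innerSL ℂ v).smulRight u

section aux

variable {H : Type*} [NormedAddCommGroup H] [InnerProductSpace ℂ H] [CompleteSpace H]

lemma rankOne_apply (u v f : H) : rankOne u v f = (inner ℂ v f : ℂ) • u := rfl

lemma rankOne_adjoint (u v : H) :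
    ContinuousLinearMap.adjoint (rankOne u v) = rankOne v u := by
  symm
  rw [ContinuousLinearMap.eq_adjoint_iff]
  intro x y
  simp only [rankOne_apply, inner_smul_left, inner_smul_right, inner_conj_symm]
  ring

end aux

/-- If `T = S_k + u ⊗ v` is quasinormal and non-isometric with `v, S_k*u` linearly
dependent, then `v` is an eigenvector of `S_k*`. -/
theorem stmt_13 {H : Type*} [NormedAddCommGroup H] [InnerProductSpace ℂ H]
    [CompleteSpace H]
    (e : HilbertBasis ℕ ℂ H) (k : ℕ) (hk : 1 ≤ k)
    (S : H →L[ℂ] H) (hS : ∀ n, S (e n) = e (n + k))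
    (u v : H) (hu : u ≠ 0) (hv : v ≠ 0)
    (hdep : ∃ r : ℂ, ContinuousLinearMap.adjoint S u = r • v)
    (T : H →L[ℂ] H) (hT : T = S + rankOne u v)
    (hq : T ∘L (ContinuousLinearMap.adjoint T ∘L T) = (ContinuousLinearMap.adjoint T ∘L T) ∘L T)
    (hni : ContinuousLinearMap.adjoint T ∘L T ≠ 1) :
    ∃ μ : ℂ, ContinuousLinearMap.adjoint S v = μ • v := by
  classical
  obtain ⟨r, hr⟩ := hdep
  -- extensionality via the Hilbert basis
  have hext : ∀ x y : H, (∀ j, (inner ℂ (e j) x : ℂ) = inner ℂ (e j) y) → x = y := by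
    intro x y h
    apply e.repr.injective
    ext j
    simp only [HilbertBasis.repr_apply_apply]
    exact h j
  have horth := orthonormal_iff_ite.mp e.orthonormal
  have hdense : Dense ((Submodule.span ℂ (Set.range e) : Submodule ℂ H) : Set H) := by
    rw [Submodule.dense_iff_topologicalClosure_eq_top]
    exact e.dense_span
  -- S is an isometry: S† S = 1
  have hSe : ∀ j, ContinuousLinearMap.adjoint S (S (e j)) = e j := by
    intro j
    apply hext
    intro m
    rw [ContinuousLinearMap.adjoint_inner_right, hS, hS, horth, horth]
    simp
  have hSS : ContinuousLinearMap.adjoint S ∘L S = 1 := by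
    apply ContinuousLinearMap.ext_on hdense
    rintro x ⟨j, rfl⟩
    simpa using hSe j
  set P : H →L[ℂ] H := rankOne v v with hP
  set c : ℂ := r + starRingEnd ℂ r + inner ℂ u u with hc
  have hTadj : ContinuousLinearMap.adjoint T = ContinuousLinearMap.adjoint S + rankOne v u := by
    rw [hT, map_add, rankOne_adjoint]
  have hTT : ContinuousLinearMap.adjoint T ∘L T = 1 + c • P := by
    rw [hTadj, hT, add_comp, comp_add, comp_add, hSS]
    have h1 : ContinuousLinearMap.adjoint S ∘L rankOne u v = r • P := by
      ext f
      simp [rankOne_apply, hr, hP, smul_smul, mul_comm]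
    have h2 : rankOne v u ∘L S = starRingEnd ℂ r • P := by
      ext f
      simp only [comp_apply, rankOne_apply, smul_apply, hP]
      rw [← ContinuousLinearMap.adjoint_inner_left, hr, inner_smul_left, smul_smul]
    have h3 : rankOne v u ∘L rankOne u v = (inner ℂ u u : ℂ) • P := by
      ext f
      simp [rankOne_apply, inner_smul_right, smul_smul, mul_comm, hP]
    rw [h1, h2, h3, hc, add_smul, add_smul]
    abel
  have hc0 : c ≠ 0 := by
    intro h
    exact hni (by rw [hTT, h, zero_smul, add_zero])
  -- commutation: T P = P T
  have hcomm : T ∘L P = P ∘L T := by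
    have h0 := hq
    rw [hTT, comp_add, add_comp] at h0
    simp only [ContinuousLinearMap.comp_id, ContinuousLinearMap.id_comp,
      ContinuousLinearMap.one_def] at h0
    have h2 := add_left_cancel h0
    rw [ContinuousLinearMap.comp_smul, ContinuousLinearMap.smul_comp] at h2
    exact smul_right_injective (H →L[ℂ] H) hc0 h2
  -- apply to vectors
  have hEq : ∀ f : H,
      (inner ℂ v f : ℂ) • T v = (inner ℂ (ContinuousLinearMap.adjoint T v) f : ℂ) • v := by
    intro f
    have h := congrArg (fun A : H →L[ℂ] H => A f) hcomm
    simp only [comp_apply, hP, rankOne_apply, map_smul] at h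
    rwa [← ContinuousLinearMap.adjoint_inner_left T] at h
  have hvv : (inner ℂ v v : ℂ) ≠ 0 := inner_self_ne_zero.mpr hv
  set a : ℂ := inner ℂ (ContinuousLinearMap.adjoint T v) v / inner ℂ v v with ha
  have hTv : T v = a • v := by
    have h := hEq v
    have h2 : T v = (inner ℂ v v : ℂ)⁻¹ • ((inner ℂ (ContinuousLinearMap.adjoint T v) v : ℂ) • v) := by
      rw [← h, smul_smul, inv_mul_cancel₀ hvv, one_smul]
    rw [h2, smul_smul, ha, div_eq_inv_mul]
  have hTsv : ContinuousLinearMap.adjoint T v = (starRingEnd ℂ a) • v := by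
    have hz : ∀ f : H,
        (inner ℂ (ContinuousLinearMap.adjoint T v - (starRingEnd ℂ a) • v) f : ℂ) = 0 := by
      intro f
      have h := hEq f
      rw [hTv, smul_smul] at h
      have h2 : (inner ℂ v f : ℂ) * a = inner ℂ (ContinuousLinearMap.adjoint T v) f := by
        have h3 := sub_eq_zero.mpr h
        rw [← sub_smul] at h3
        rcases smul_eq_zero.mp h3 with h4 | h4
        · exact sub_eq_zero.mp h4
        · exact absurd h4 hv
      rw [inner_sub_left, inner_smul_left, Complex.conj_conj, ← h2]
      ring
    have h := hz (ContinuousLinearMap.adjoint T v - (starRingEnd ℂ a) • v)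
    rwa [inner_self_eq_zero, sub_eq_zero] at h
  refine ⟨starRingEnd ℂ a - inner ℂ u v, ?_⟩
  have h := congrArg (fun A : H →L[ℂ] H => A v) hTadj
  simp only [add_apply, rankOne_apply] at h
  rw [hTsv] at h
  rw [sub_smul]
  exact eq_sub_of_add_eq h.symm
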